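/- For all matrices X and S indexed by (Fin d_a) × J_k that are PSD with trace 1, one has ‖A(X − S)‖² ≤ 4 (this is the curvature bound C ≤ 4 for the Frank–Wolfe method applied to the EXT least-squares problem over the spectraplex). -/

import Mathlib

open Matrix
open scoped Kronecker ComplexOrder

noncomputable section

instance monoDecidable {k d : ℕ} : DecidablePred (Monotone : (Fin k → Fin d) → Prop) :=
  fun f => decidable_of_iff (∀ a b : Fin k, a ≤ b → f a ≤ f b) Iff.rfl

/-- `Jk d k` : nondecreasing sequences of length `k` from `{0, …, d-1}`. -/
abbrev Jk (d k : ℕ) := {f : Fin k → Fin d // Monotone f}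

/-- the nondecreasing rearrangement of a sequence. -/
def sortTuple {d k : ℕ} (i : Fin k → Fin d) : Jk d k :=
  ⟨i ∘ Tuple.sort i, Tuple.monotone_sort i⟩

/-- `permCount j` : the number of sequences whose sorted rearrangement is `j`. -/
def permCount {d k : ℕ} (j : Jk d k) : ℕ :=
  (Finset.univ.filter fun i : Fin k → Fin d => sortTuple i = j).card

/-- The scaled partition matrix `P`. -/
def Pmat (d k : ℕ) : Matrix (Fin k → Fin d) (Jk d k) ℂ :=
  fun i j => if sortTuple i = j then (((permCount j : ℝ) ^ (-(1/2) : ℝ) : ℝ) : ℂ) else 0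

/-- `cons0 b r` is the sequence `b⌢r` sending `0` to `b` and `s+1` to `r s`. -/
def cons0 {d k : ℕ} (b : Fin d) (r : Fin (k - 1) → Fin d) : Fin k → Fin d :=
  fun s => if h : (s : ℕ) = 0 then b else r ⟨(s : ℕ) - 1, by have := s.isLt; omega⟩

/-- Partial trace over the last `k - 1` factors. -/
def PTr (da d k : ℕ)
    (M : Matrix (Fin da × (Fin k → Fin d)) (Fin da × (Fin k → Fin d)) ℂ) :
    Matrix (Fin da × Fin d) (Fin da × Fin d) ℂ :=
  fun p q => ∑ r : Fin (k - 1) → Fin d, M (p.1, cons0 p.2 r) (q.1, cons0 q.2 r)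

/-- The operator `A`. -/
def Amap (da d k : ℕ) (X : Matrix (Fin da × Jk d k) (Fin da × Jk d k) ℂ) :
    Matrix (Fin da × Fin d) (Fin da × Fin d) ℂ :=
  PTr da d k (((1 : Matrix (Fin da) (Fin da) ℂ) ⊗ₖ Pmat d k) * X *
    ((1 : Matrix (Fin da) (Fin da) ℂ) ⊗ₖ Pmat d k)ᴴ)

/-- The extension operator `E` : `E(W) ((a,i),(a',i')) = W ((a, i 0), (a', i' 0))` when
`i` and `i'` agree on all later coordinates, and `0` otherwise. -/
def Emat (da d k : ℕ) (hk : 0 < k)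
    (W : Matrix (Fin da × Fin d) (Fin da × Fin d) ℂ) :
    Matrix (Fin da × (Fin k → Fin d)) (Fin da × (Fin k → Fin d)) ℂ :=
  fun p q =>
    if ∀ s : Fin (k - 1),
        p.2 ⟨(s : ℕ) + 1, by have := s.isLt; omega⟩ =
          q.2 ⟨(s : ℕ) + 1, by have := s.isLt; omega⟩
    then W (p.1, p.2 ⟨0, hk⟩) (q.1, q.2 ⟨0, hk⟩) else 0

/-- The adjoint operator `A†`. -/
def Adag (da d k : ℕ) (hk : 0 < k)
    (W : Matrix (Fin da × Fin d) (Fin da × Fin d) ℂ) :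
    Matrix (Fin da × Jk d k) (Fin da × Jk d k) ℂ :=
  ((1 : Matrix (Fin da) (Fin da) ℂ) ⊗ₖ Pmat d k)ᴴ * Emat da d k hk W *
    ((1 : Matrix (Fin da) (Fin da) ℂ) ⊗ₖ Pmat d k)

/-- Partial transpose in the second index. -/
def pTransp {m α : Type*} (M : Matrix (m × α) (m × α) ℂ) : Matrix (m × α) (m × α) ℂ :=
  fun p q => M (p.1, q.2) (q.1, p.2)

/-- Squared Frobenius norm. -/
def frobSq {α β : Type*} [Fintype α] [Fintype β] (M : Matrix α β ℂ) : ℝ :=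
  ∑ p, ∑ q, ‖M p q‖ ^ 2

/-- Largest eigenvalue of a Hermitian matrix. -/
def lamMax {n : Type*} [Fintype n] [DecidableEq n]
    {M : Matrix n n ℂ} (hM : M.IsHermitian) : ℝ :=
  ⨆ i, hM.eigenvalues i

end

/-!
`A` is a completely positive trace-preserving map: conjugation by the isometry `I ⊗ P` preserves
the trace and positivity, and the partial trace is a sum of principal submatrices whose diagonals
together exhaust the diagonal of its argument. Hence `A(X)` is PSD of trace one for a density
matrix `X`, and the Cauchy–Schwarz bound `|M p q|² ≤ M p p · M q q` for PSD matrices gives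
`‖A(X)‖² ≤ (tr A(X))² = 1`. Finally `‖A(X) - A(S)‖² ≤ 2 (‖A(X)‖² + ‖A(S)‖²) ≤ 4`.
-/

lemma Matrix.PosSemidef.norm_apply_sq_le {n : Type*} {M : Matrix n n ℂ} (hM : M.PosSemidef)
    (i j : n) : ‖M i j‖ ^ 2 ≤ (M i i).re * (M j j).re := by
  have hdet := (hM.submatrix ![i, j]).det_nonneg
  have hji : M j i = star (M i j) := by simpa using (hM.isHermitian.apply j i).symm
  have hii := (Complex.nonneg_iff.mp (hM.diag_nonneg (i := i))).2
  simp only [det_fin_two, submatrix_apply, Matrix.cons_val_zero, Matrix.cons_val_one, hji,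
    Complex.nonneg_iff, Complex.sub_re, Complex.mul_re, Complex.star_def, Complex.conj_re,
    Complex.conj_im] at hdet
  rw [← hii, zero_mul, sub_zero] at hdet
  rw [Complex.sq_norm, Complex.normSq_apply]
  linarith [hdet.1]

section Frobenius

variable {m n : Type*} [Fintype m] [Fintype n]

lemma Matrix.PosSemidef.frobSq_le_re_trace_sq {M : Matrix n n ℂ} (hM : M.PosSemidef) :
    frobSq M ≤ M.trace.re ^ 2 := by
  calc frobSq M ≤ ∑ p, ∑ q, (M p p).re * (M q q).re :=
        Finset.sum_le_sum fun p _ => Finset.sum_le_sum fun q _ => hM.norm_apply_sq_le p q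
    _ = M.trace.re ^ 2 := by
        rw [sq, trace, Complex.re_sum, Finset.sum_mul_sum]
        rfl

lemma frobSq_sub_le (A B : Matrix m n ℂ) : frobSq (A - B) ≤ 2 * (frobSq A + frobSq B) := by
  simp only [frobSq, Finset.mul_sum, ← Finset.sum_add_distrib, Matrix.sub_apply]
  gcongr with p _ q _
  nlinarith [norm_sub_le (A p q) (B p q), norm_nonneg (A p q), norm_nonneg (B p q),
    norm_nonneg (A p q - B p q), sq_nonneg (‖A p q‖ - ‖B p q‖)]

end Frobenius

lemma cons0_eq_cons {d k : ℕ} (b : Fin d) (r : Fin k → Fin d) :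
    (cons0 b r : Fin (k + 1) → Fin d) = Fin.cons b r := by
  funext s
  cases s using Fin.cases with
  | zero => simp [cons0]
  | succ s => simp [cons0]

lemma cons0_bijective {d k : ℕ} (hk : 0 < k) :
    Function.Bijective fun x : Fin d × (Fin (k - 1) → Fin d) => (cons0 x.1 x.2 : Fin k → Fin d) := by
  obtain ⟨k, rfl⟩ := Nat.exists_eq_add_one_of_ne_zero hk.ne'
  simp only [cons0_eq_cons]
  exact (Fin.consEquiv fun _ => Fin d).bijective

section PartialTrace

variable {da d k : ℕ}

lemma PTr_eq_sum_submatrix (M : Matrix (Fin da × (Fin k → Fin d)) (Fin da × (Fin k → Fin d)) ℂ) :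
    PTr da d k M =
      ∑ r, M.submatrix (fun p => (p.1, cons0 p.2 r)) (fun p => (p.1, cons0 p.2 r)) := by
  ext p q
  simp [PTr, Matrix.sum_apply]

lemma PTr_posSemidef {M : Matrix (Fin da × (Fin k → Fin d)) (Fin da × (Fin k → Fin d)) ℂ}
    (hM : M.PosSemidef) : (PTr da d k M).PosSemidef := by
  rw [PTr_eq_sum_submatrix]
  exact posSemidef_sum _ fun r _ => hM.submatrix _

lemma trace_PTr (hk : 0 < k)
    (M : Matrix (Fin da × (Fin k → Fin d)) (Fin da × (Fin k → Fin d)) ℂ) :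
    (PTr da d k M).trace = M.trace := by
  simp only [trace, diag, PTr, Fintype.sum_prod_type]
  refine Finset.sum_congr rfl fun a _ => ?_
  rw [← Fintype.sum_prod_type']
  exact (cons0_bijective hk).sum_comp fun i => M (a, i) (a, i)

lemma PTr_sub (M N : Matrix (Fin da × (Fin k → Fin d)) (Fin da × (Fin k → Fin d)) ℂ) :
    PTr da d k (M - N) = PTr da d k M - PTr da d k N := by
  ext p q
  simp [PTr, Finset.sum_sub_distrib]

end PartialTrace

lemma sortTuple_coe {d k : ℕ} (j : Jk d k) : sortTuple j.1 = j :=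
  Subtype.ext <| by simp [sortTuple, Tuple.sort_eq_refl_iff_monotone.mpr j.2]

lemma permCount_pos {d k : ℕ} (j : Jk d k) : 0 < permCount j :=
  Finset.card_pos.mpr ⟨j.1, by simp [sortTuple_coe]⟩

lemma conjTranspose_Pmat_mul_Pmat (d k : ℕ) : (Pmat d k)ᴴ * Pmat d k = 1 := by
  ext j j'
  simp only [mul_apply, conjTranspose_apply, Pmat, apply_ite star, star_zero, ite_mul, mul_ite,
    zero_mul, mul_zero, Complex.star_def, Complex.conj_ofReal]
  rcases eq_or_ne j j' with rfl | hne
  · have hpos : (0 : ℝ) < permCount j := by exact_mod_cast permCount_pos j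
    have hsq : ((permCount j : ℝ) ^ (-(1/2) : ℝ)) * (permCount j : ℝ) ^ (-(1/2) : ℝ) =
        (permCount j : ℝ)⁻¹ := by
      rw [← Real.rpow_add hpos]; norm_num [Real.rpow_neg_one]
    simp only [← Complex.ofReal_mul, hsq, ← Finset.sum_filter, Finset.filter_filter, and_self,
      Finset.sum_const, one_apply_eq]
    change permCount j • (((permCount j : ℝ)⁻¹ : ℝ) : ℂ) = 1
    rw [nsmul_eq_mul]
    push_cast
    exact mul_inv_cancel₀ (by exact_mod_cast (permCount_pos j).ne')
  · rw [one_apply_ne hne]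
    refine Finset.sum_eq_zero fun i _ => ?_
    split_ifs with h h' <;> simp_all

lemma conjTranspose_one_kronecker_mul_self {m n p : Type*} [Fintype m] [DecidableEq m]
    [Fintype n] [DecidableEq p] {V : Matrix n p ℂ} (hV : Vᴴ * V = 1) :
    ((1 : Matrix m m ℂ) ⊗ₖ V)ᴴ * ((1 : Matrix m m ℂ) ⊗ₖ V) = 1 := by
  rw [conjTranspose_kronecker, ← mul_kronecker_mul, hV, conjTranspose_one, Matrix.one_mul,
    one_kronecker_one]

section Amap

variable {da d k : ℕ}

lemma Amap_posSemidef {X : Matrix (Fin da × Jk d k) (Fin da × Jk d k) ℂ} (hX : X.PosSemidef) :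
    (Amap da d k X).PosSemidef :=
  PTr_posSemidef (hX.mul_mul_conjTranspose_same _)

lemma trace_Amap (hk : 0 < k) (X : Matrix (Fin da × Jk d k) (Fin da × Jk d k) ℂ) :
    (Amap da d k X).trace = X.trace := by
  rw [Amap, trace_PTr hk, trace_mul_comm, ← Matrix.mul_assoc,
    conjTranspose_one_kronecker_mul_self (conjTranspose_Pmat_mul_Pmat d k), Matrix.one_mul]

lemma Amap_sub (X S : Matrix (Fin da × Jk d k) (Fin da × Jk d k) ℂ) :
    Amap da d k (X - S) = Amap da d k X - Amap da d k S := by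
  simp only [Amap, Matrix.mul_sub, Matrix.sub_mul, PTr_sub]

lemma frobSq_Amap_le_one (hk : 0 < k) {X : Matrix (Fin da × Jk d k) (Fin da × Jk d k) ℂ}
    (hX : X.PosSemidef) (hXtr : X.trace = 1) : frobSq (Amap da d k X) ≤ 1 := by
  simpa [trace_Amap hk, hXtr] using (Amap_posSemidef hX).frobSq_le_re_trace_sq

end Amap

theorem stmt9_general (da d k : ℕ) (hk : 0 < k)
    (X S : Matrix (Fin da × Jk d k) (Fin da × Jk d k) ℂ)
    (hX : X.PosSemidef) (hXtr : X.trace = 1)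
    (hS : S.PosSemidef) (hStr : S.trace = 1) :
    frobSq (Amap da d k (X - S)) ≤ 4 := by
  rw [Amap_sub]
  linarith [frobSq_sub_le (Amap da d k X) (Amap da d k S), frobSq_Amap_le_one hk hX hXtr,
    frobSq_Amap_le_one hk hS hStr]

theorem stmt9 (da d k : ℕ) (hda : 0 < da) (hd : 0 < d) (hk : 0 < k)
    (X S : Matrix (Fin da × Jk d k) (Fin da × Jk d k) ℂ)
    (hX : X.PosSemidef) (hXtr : X.trace = 1)
    (hS : S.PosSemidef) (hStr : S.trace = 1) :
    frobSq (Amap da d k (X - S)) ≤ 4 :=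
  stmt9_general da d k hk X S hX hXtr hS hStr
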